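/- arXiv:2404.17116 — 3 statements merged into one kernel-verified Lean document; each statement's English description precedes it below -/
import Mathlib

section
/- In a locally finite connected graph G (every vertex has finite degree), two rays are equivalent under the end relation if and only if they are equivalent under the edge-end relation. -/
open SimpleGraph

universe u

/-- A ray (one-way infinite path) in a graph. -/
structure GraphRay {V : Type u} (G : SimpleGraph V) : Type u where
  f : ℕ → V
  inj : Function.Injective f
  adj : ∀ n : ℕ, G.Adj (f n) (f (n + 1))

/-- The graph `G - S`: delete a set of vertices (they become isolated). -/
def SimpleGraph.vDel {V : Type u} (G : SimpleGraph V) (S : Set V) : SimpleGraph V where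
  Adj u v := G.Adj u v ∧ u ∉ S ∧ v ∉ S
  symm := ⟨fun u v h => ⟨h.1.symm, h.2.2, h.2.1⟩⟩
  loopless := ⟨fun v h => G.loopless.1 v h.1⟩

/-- The graph `G - F`: delete a set of edges. -/
def SimpleGraph.eDel {V : Type u} (G : SimpleGraph V) (F : Set (Sym2 V)) : SimpleGraph V where
  Adj u v := G.Adj u v ∧ s(u, v) ∉ F
  symm := ⟨fun u v h => ⟨h.1.symm, by rw [Sym2.eq_swap]; exact h.2⟩⟩
  loopless := ⟨fun v h => G.loopless.1 v h.1⟩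

/-- Tails of the rays `r` and `s` lie in the same connected component of `G - S`. -/
def GraphRay.VConn {V : Type u} (G : SimpleGraph V) (S : Set V) (r s : GraphRay G) : Prop :=
  ∃ N M : ℕ, (∀ n, N ≤ n → r.f n ∉ S) ∧ (∀ m, M ≤ m → s.f m ∉ S) ∧
    (G.vDel S).Reachable (r.f N) (s.f M)

/-- Tails of the rays `r` and `s` lie in the same connected component of `G - F`. -/
def GraphRay.EConn {V : Type u} (G : SimpleGraph V) (F : Set (Sym2 V)) (r s : GraphRay G) : Prop :=
  ∃ N M : ℕ, (∀ n, N ≤ n → s(r.f n, r.f (n + 1)) ∉ F) ∧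
    (∀ m, M ≤ m → s(s.f m, s.f (m + 1)) ∉ F) ∧
    (G.eDel F).Reachable (r.f N) (s.f M)

/-- The end relation: no finite vertex set separates the two rays. -/
def endEquiv {V : Type u} (G : SimpleGraph V) (r s : GraphRay G) : Prop :=
  ∀ S : Set V, S.Finite → GraphRay.VConn G S r s

/-- The edge-end relation: no finite edge set separates the two rays. -/
def edgeEndEquiv {V : Type u} (G : SimpleGraph V) (r s : GraphRay G) : Prop :=
  ∀ F : Set (Sym2 V), F.Finite → F ⊆ G.edgeSet → GraphRay.EConn G F r s

/-- `v` dominates the ray `r`: no finite vertex set avoiding `v` separates `v` from a tail of `r`. -/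
def dominates {V : Type u} (G : SimpleGraph V) (v : V) (r : GraphRay G) : Prop :=
  ∀ S : Set V, S.Finite → v ∉ S →
    ∃ N : ℕ, (∀ n, N ≤ n → r.f n ∉ S) ∧ (G.vDel S).Reachable v (r.f N)

/-- `v` edge-dominates the ray `r`: no finite edge set separates `v` from a tail of `r`. -/
def edgeDominates {V : Type u} (G : SimpleGraph V) (v : V) (r : GraphRay G) : Prop :=
  ∀ F : Set (Sym2 V), F.Finite → F ⊆ G.edgeSet →
    ∃ N : ℕ, (∀ n, N ≤ n → s(r.f n, r.f (n + 1)) ∉ F) ∧ (G.eDel F).Reachable v (r.f N)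

/-- The end space of `G` as a quotient of the set of rays. -/
def EndSpace {V : Type u} (G : SimpleGraph V) : Type u := Quot (endEquiv G)

/-- The edge-end space of `G` as a quotient of the set of rays. -/
def EdgeEndSpace {V : Type u} (G : SimpleGraph V) : Type u := Quot (edgeEndEquiv G)

/-- The end topology, generated by the sets `Ω(S, [r])` for finite `S ⊆ V(G)`. -/
instance {V : Type u} (G : SimpleGraph V) : TopologicalSpace (EndSpace G) :=
  TopologicalSpace.generateFrom
    {O | ∃ (S : Set V) (_ : S.Finite) (r : GraphRay G),
      O = {x | ∃ s : GraphRay G, x = Quot.mk (endEquiv G) s ∧ GraphRay.VConn G S r s}}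

/-- The edge-end topology, generated by the sets `Ω_E(F, [r]_E)` for finite `F ⊆ E(G)`. -/
instance {V : Type u} (G : SimpleGraph V) : TopologicalSpace (EdgeEndSpace G) :=
  TopologicalSpace.generateFrom
    {O | ∃ (F : Set (Sym2 V)) (_ : F.Finite) (_ : F ⊆ G.edgeSet) (r : GraphRay G),
      O = {x | ∃ s : GraphRay G, x = Quot.mk (edgeEndEquiv G) s ∧ GraphRay.EConn G F r s}}

/-
Deleting the finitely many endpoints of a finite edge set `F` destroys every edge of `F`, and, when
`G` is locally finite, deleting the finitely many edges at a finite vertex set `S` isolates `S`.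
So each kind of finite separator is dominated by one of the other kind, and separation of tails
by one implies separation by the other.
-/

theorem Sym2.finite_setOf_mem {α : Type*} (z : Sym2 α) : {x | x ∈ z}.Finite := by
  classical
  exact z.toFinset.finite_toSet.subset fun _ hx => Sym2.mem_toFinset.2 hx

namespace SimpleGraph

variable {V : Type u} {G : SimpleGraph V} {S : Set V} {F : Set (Sym2 V)}

theorem finite_incidenceSet {v : V} (hv : (G.neighborSet v).Finite) :
    (G.incidenceSet v).Finite := by
  classical
  have := hv.to_subtype
  exact Set.finite_coe_iff.1 (Finite.of_equiv _ (G.incidenceSetEquivNeighborSet v).symm)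

theorem mk_notMem_of_forall_exists_mem (hFS : ∀ e ∈ F, ∃ v ∈ S, v ∈ e) {a b : V}
    (ha : a ∉ S) (hb : b ∉ S) : s(a, b) ∉ F := fun he => by
  obtain ⟨v, hvS, hve⟩ := hFS _ he
  rcases Sym2.mem_iff.1 hve with rfl | rfl <;> contradiction

theorem vDel_le_eDel (hFS : ∀ e ∈ F, ∃ v ∈ S, v ∈ e) : G.vDel S ≤ G.eDel F :=
  fun _ _ h => ⟨h.1, mk_notMem_of_forall_exists_mem hFS h.2.1 h.2.2⟩

theorem notMem_of_incidenceSet_subset (hSF : ∀ v ∈ S, G.incidenceSet v ⊆ F) {a b : V}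
    (hab : G.Adj a b) (hF : s(a, b) ∉ F) : a ∉ S :=
  fun ha => hF (hSF a ha ⟨hab, Sym2.mem_mk_left a b⟩)

theorem eDel_le_vDel (hSF : ∀ v ∈ S, G.incidenceSet v ⊆ F) : G.eDel F ≤ G.vDel S :=
  fun _ _ h => ⟨h.1, notMem_of_incidenceSet_subset hSF h.1 h.2,
    notMem_of_incidenceSet_subset hSF h.1.symm (Sym2.eq_swap ▸ h.2)⟩

end SimpleGraph

namespace GraphRay

variable {V : Type u} {G : SimpleGraph V} {S : Set V} {F : Set (Sym2 V)} {r s : GraphRay G}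

theorem VConn.eConn (hFS : ∀ e ∈ F, ∃ v ∈ S, v ∈ e) (h : VConn G S r s) : EConn G F r s := by
  obtain ⟨N, M, hr, hs, hreach⟩ := h
  exact ⟨N, M,
    fun n hn => mk_notMem_of_forall_exists_mem hFS (hr n hn) (hr (n + 1) (by omega)),
    fun m hm => mk_notMem_of_forall_exists_mem hFS (hs m hm) (hs (m + 1) (by omega)),
    hreach.mono (vDel_le_eDel hFS)⟩

theorem EConn.vConn (hSF : ∀ v ∈ S, G.incidenceSet v ⊆ F) (h : EConn G F r s) :
    VConn G S r s := by
  obtain ⟨N, M, hr, hs, hreach⟩ := h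
  exact ⟨N, M,
    fun n hn => notMem_of_incidenceSet_subset hSF (r.adj n) (hr n hn),
    fun m hm => notMem_of_incidenceSet_subset hSF (s.adj m) (hs m hm),
    hreach.mono (eDel_le_vDel hSF)⟩

end GraphRay

theorem edgeEndEquiv_of_endEquiv {V : Type u} {G : SimpleGraph V} {r s : GraphRay G}
    (h : endEquiv G r s) : edgeEndEquiv G r s := fun F hF _ =>
  (h (⋃ e ∈ F, {v | v ∈ e}) (hF.biUnion fun e _ => e.finite_setOf_mem)).eConn fun e he =>
    ⟨e.out.1, Set.mem_biUnion he (Sym2.out_fst_mem e), Sym2.out_fst_mem e⟩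

theorem endEquiv_of_edgeEndEquiv {V : Type u} {G : SimpleGraph V}
    (hlf : ∀ v : V, (G.neighborSet v).Finite) {r s : GraphRay G}
    (h : edgeEndEquiv G r s) : endEquiv G r s := fun S hS =>
  (h (⋃ v ∈ S, G.incidenceSet v) (hS.biUnion fun v _ => finite_incidenceSet (hlf v))
      (Set.iUnion₂_subset fun v _ => G.incidenceSet_subset v)).vConn
    fun _ hv => Set.subset_biUnion_of_mem hv

theorem endEquiv_iff_edgeEndEquiv_of_locallyFinite_general {V : Type u} (G : SimpleGraph V)
    (hlf : ∀ v : V, (G.neighborSet v).Finite)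
    (r s : GraphRay G) :
    endEquiv G r s ↔ edgeEndEquiv G r s :=
  ⟨edgeEndEquiv_of_endEquiv, endEquiv_of_edgeEndEquiv hlf⟩

/-- in a locally finite connected graph, the end relation and the
edge-end relation coincide. -/
theorem endEquiv_iff_edgeEndEquiv_of_locallyFinite {V : Type u} (G : SimpleGraph V)
    (hconn : G.Connected) (hlf : ∀ v : V, (G.neighborSet v).Finite)
    (r s : GraphRay G) :
    endEquiv G r s ↔ edgeEndEquiv G r s :=
  endEquiv_iff_edgeEndEquiv_of_locallyFinite_general G hlf r s
end

section
/- Let G be a graph, H the graph obtained from G by duplicating each vertex v in a set D ⊆ V(G) to a pair v, v' joined by an edge, with the other edges of G rearranged via an injective map τ : E(G) → E(H) (each former edge at v reattached to exactly one of v, v'). If K' is a connected subgraph of H, then the subgraph K of G whose edge set is τ⁻¹(E(K')) (with its endpoints as vertices) is connected. -/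
open SimpleGraph

universe u

/-- In the duplication `H` of `G` along `D` (with choice function `σ`), the endpoint on
the `v`-side of the former edge `vu`: for `v ∈ D` it is `v = Sum.inl v` or its copy
`v' = Sum.inr v` according to the bipartition `σ v`, and `v` itself otherwise. -/
noncomputable def att2 {V : Type u} (D : Set V) (σ : V → V → Bool) (v u : V) : V ⊕ V :=
  haveI := Classical.dec (v ∈ D)
  if v ∈ D then (if σ v u then Sum.inl v else Sum.inr v) else Sum.inl v

/-- The graph `H` obtained from `G` by duplicating each `v ∈ D` to a pair `v, v'`
joined by an edge, each former edge at `v` reattached to exactly one of `v, v'`. -/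
noncomputable def dupGraph {V : Type u} (G : SimpleGraph V) (D : Set V)
    (σ : V → V → Bool) : SimpleGraph (V ⊕ V) :=
  SimpleGraph.fromRel (fun x y =>
    (∃ v ∈ D, x = Sum.inl v ∧ y = Sum.inr v) ∨
    (∃ u v : V, G.Adj u v ∧ x = att2 D σ u v ∧ y = att2 D σ v u))

/-- The subgraph `K` of `G` whose edges form `τ⁻¹(E(K'))`, for a subgraph `K'` of `H`. -/
noncomputable def preSub {V : Type u} (G : SimpleGraph V) (D : Set V) (σ : V → V → Bool)
    (K' : (dupGraph G D σ).Subgraph) : G.Subgraph where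
  verts := {u | ∃ v : V, G.Adj u v ∧ K'.Adj (att2 D σ u v) (att2 D σ v u)}
  Adj u v := G.Adj u v ∧ K'.Adj (att2 D σ u v) (att2 D σ v u)
  adj_sub h := h.1
  edge_vert h := ⟨_, h⟩
  symm := ⟨fun u v h => ⟨h.1.symm, h.2.symm⟩⟩

/-!
The projection `V ⊕ V → V` forgetting the copy collapses each new edge `vv'` of `H` to the vertex
`v` and sends `τ(e)` back to `e`. Hence it maps walks of `K'` to walks of `K` (with repeated
vertices), and every vertex of `K` is the image of an endpoint of an edge of `K'`.
-/

namespace SimpleGraph.Subgraph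

variable {V W : Type*} {G : SimpleGraph V} {G' : SimpleGraph W}

theorem coe_reachable_iff_reflTransGen {K : G.Subgraph} {u v : V} (hu : u ∈ K.verts)
    (hv : v ∈ K.verts) :
    K.coe.Reachable ⟨u, hu⟩ ⟨v, hv⟩ ↔ Relation.ReflTransGen K.Adj u v := by
  refine ⟨fun h => ((reachable_iff_reflTransGen _ _).1 h).lift Subtype.val fun _ _ => id,
    fun h => ?_⟩
  induction h with
  | refl => rfl
  | tail _ hbc ih => exact (ih (K.edge_vert hbc)).trans (Adj.reachable hbc)

theorem Preconnected.of_surjOn {K' : G'.Subgraph} {K : G.Subgraph} (f : W → V)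
    (hK' : K'.Preconnected) (hf : ∀ ⦃x y⦄, K'.Adj x y → Relation.ReflGen K.Adj (f x) (f y))
    (hsurj : Set.SurjOn f K'.verts K.verts) : K.Preconnected := by
  rw [Subgraph.preconnected_iff]
  rintro ⟨_, hu⟩ ⟨_, hv⟩
  obtain ⟨x, hx, rfl⟩ := hsurj hu
  obtain ⟨y, hy, rfl⟩ := hsurj hv
  have hxy := (coe_reachable_iff_reflTransGen hx hy).1 (hK' ⟨x, hx⟩ ⟨y, hy⟩)
  rw [coe_reachable_iff_reflTransGen, ← Relation.reflTransGen_reflGen]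
  exact hxy.lift f hf

end SimpleGraph.Subgraph

section Duplication

variable {V : Type u} {G : SimpleGraph V} {D : Set V} {σ : V → V → Bool}

theorem elim_id_att2 (u v : V) : Sum.elim id id (att2 D σ u v) = u := by
  unfold att2
  split_ifs <;> rfl

theorem preSub_reflGen_of_adj {K' : (dupGraph G D σ).Subgraph} {x y : V ⊕ V}
    (hxy : K'.Adj x y) :
    Relation.ReflGen (preSub G D σ K').Adj (Sum.elim id id x) (Sum.elim id id y) := by
  obtain ⟨-, h | h⟩ := hxy.adj_sub
  · rcases h with ⟨v, -, rfl, rfl⟩ | ⟨u, v, huv, rfl, rfl⟩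
    · exact .refl
    · exact .single <| by rw [elim_id_att2, elim_id_att2]; exact ⟨huv, hxy⟩
  · rcases h with ⟨v, -, rfl, rfl⟩ | ⟨u, v, huv, rfl, rfl⟩
    · exact .refl
    · exact .single <| by rw [elim_id_att2, elim_id_att2]; exact ⟨huv.symm, hxy⟩

theorem surjOn_preSub_verts (K' : (dupGraph G D σ).Subgraph) :
    Set.SurjOn (Sum.elim id id) K'.verts (preSub G D σ K').verts := by
  rintro u ⟨v, -, huv⟩
  exact ⟨att2 D σ u v, K'.edge_vert huv, elim_id_att2 u v⟩

end Duplication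

/-- if `K'` is a connected subgraph of the duplication `H`, then the
subgraph of `G` with edge set `τ⁻¹(E(K'))` is connected. -/
theorem preSub_preconnected {V : Type u} (G : SimpleGraph V) (D : Set V)
    (σ : V → V → Bool) (K' : (dupGraph G D σ).Subgraph) (hK' : K'.Connected) :
    (preSub G D σ K').coe.Preconnected :=
  (hK'.preconnected.of_surjOn _ (fun _ _ => preSub_reflGen_of_adj)
    (surjOn_preSub_verts K')).coe
end

section
/- Let T be a special order tree (a countable union of antichains). For t ∈ T let [t,∅] = {r ∈ R(T) : t ∈ r}, where R(T) is the set of high-rays of T with the topology generated by the sets [t,F] = {r : t ∈ r and t' ∉ r for all t' ∈ F}, F a finite set of tops of r. Then C = {[t,∅] : t ∈ T} is a nested, noetherian, σ-disjoint clopen subbase for R(T). -/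
/-- A high-ray of an order tree: a down-closed chain of cofinality `ω`. -/
def IsHighRay {T : Type*} [PartialOrder T] (r : Set T) : Prop :=
  IsChain (· ≤ ·) r ∧ (∀ x ∈ r, ∀ y, y ≤ x → y ∈ r) ∧
    ∃ f : ℕ → T, (∀ n, f n ∈ r) ∧ (∀ n, f n < f (n + 1)) ∧ ∀ x ∈ r, ∃ n, x ≤ f n

/-- The set of high-rays of `T`. -/
def HighRays (T : Type*) [PartialOrder T] : Type _ := {r : Set T // IsHighRay r}

/-- `t` is a top of the high-ray `r`: a minimal element strictly above every node of `r`. -/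
def IsTopOf {T : Type*} [PartialOrder T] (r : Set T) (t : T) : Prop :=
  (∀ x ∈ r, x < t) ∧ ∀ t' : T, (∀ x ∈ r, x < t') → t' ≤ t → t' = t

/-- The basic set `[t, F] = {r : t ∈ r, t' ∉ r for all t' ∈ F}`. -/
def hrBasic {T : Type*} [PartialOrder T] (t : T) (F : Finset T) : Set (HighRays T) :=
  {r | t ∈ r.1 ∧ ∀ t' ∈ F, t' ∉ r.1}

/-- The generating family of the high-ray space topology: all sets `[t, F]` where
`t` lies on some high-ray `r` and `F` is a finite set of tops of `r`. -/
def hrGen (T : Type*) [PartialOrder T] : Set (Set (HighRays T)) :=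
  {O | ∃ (t : T) (F : Finset T) (r : HighRays T),
    t ∈ r.1 ∧ (∀ t' ∈ F, IsTopOf r.1 t') ∧ O = hrBasic t F}

/-- The topology of the high-ray space `R(T)`. -/
instance (T : Type*) [PartialOrder T] : TopologicalSpace (HighRays T) :=
  TopologicalSpace.generateFrom (hrGen T)

/-- `T` is an order tree: the strict predecessors of any node form a well-ordered chain. -/
def IsOrderTree (T : Type*) [PartialOrder T] : Prop :=
  ∀ t : T, IsChain (· ≤ ·) (Set.Iio t) ∧ (Set.Iio t).WellFoundedOn (· < ·)

/-- `T` is special: a countable union of antichains. -/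
def IsSpecialTree (T : Type*) [PartialOrder T] : Prop :=
  ∃ A : ℕ → Set T, (⋃ n, A n) = Set.univ ∧ ∀ n, IsAntichain (· ≤ ·) (A n)

/-!
The sets `[t,∅]` inherit the shape of the tree: they shrink as `t` grows and are disjoint for
incomparable `t`, which gives nestedness and, from the antichain decomposition, σ-disjointness.
The only other input is that `<` is well-founded on an order tree. Noetherianity follows by taking,
along a ray lying in the chain, the least `t` whose `[t,∅]` belongs to it. For closedness, a ray `r`
avoiding `t` is separated from `[t,∅]` either by `[x,∅]` for some `x ∈ r` incomparable to `t`, or,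
if `r` lies below `t`, by `[x,{m}]` for the least `m ≤ t` above `r`, which is a top of `r`.
Finally `[t,F] = [t,∅] ∩ ⋂_{t' ∈ F} [t',∅]ᶜ`, so the `[t,∅]` and their complements are a subbase.
-/

theorem wellFounded_lt_of_wellFoundedOn_Iio {T : Type*} [Preorder T]
    (h : ∀ t : T, (Set.Iio t).WellFoundedOn (· < ·)) :
    WellFounded ((· < ·) : T → T → Prop) := by
  refine WellFounded.wellFounded_iff_has_min.2 fun S ⟨s, hs⟩ => ?_
  by_cases hbelow : (S ∩ Set.Iio s).Nonempty
  · obtain ⟨m, ⟨hmS, hms⟩, hmin⟩ := (Set.wellFoundedOn_iff.1 (h s)).has_min _ hbelow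
    exact ⟨m, hmS, fun x hxS hxm => hmin x ⟨hxS, hxm.trans hms⟩ ⟨hxm, hxm.trans hms, hms⟩⟩
  · exact ⟨s, hs, fun x hxS hxs => hbelow ⟨x, hxS, hxs⟩⟩

section HighRays

variable {T : Type*} [PartialOrder T]

theorem HighRays.mem_of_le (r : HighRays T) {s t : T} (hst : s ≤ t) (ht : t ∈ r.1) : s ∈ r.1 :=
  r.2.2.1 t ht s hst

@[simp]
theorem mem_hrBasic_empty {t : T} {r : HighRays T} : r ∈ hrBasic t ∅ ↔ t ∈ r.1 := by
  simp [hrBasic]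

theorem hrBasic_eq_inter (t : T) (F : Finset T) :
    hrBasic t F = hrBasic t ∅ ∩ ⋂ t' ∈ F, (hrBasic t' ∅)ᶜ := by
  ext r
  simp [hrBasic]

theorem hrBasic_empty_subset_of_le {s t : T} (hst : s ≤ t) : hrBasic t ∅ ⊆ hrBasic s ∅ :=
  fun r hr => mem_hrBasic_empty.2 (r.mem_of_le hst (mem_hrBasic_empty.1 hr))

theorem disjoint_hrBasic_empty {s t : T} (hst : ¬s ≤ t) (hts : ¬t ≤ s) :
    Disjoint (hrBasic s ∅) (hrBasic t ∅) := by
  refine Set.disjoint_left.2 fun r hs ht => ?_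
  rcases r.2.1.total (mem_hrBasic_empty.1 hs) (mem_hrBasic_empty.1 ht) with h | h
  exacts [hst h, hts h]

theorem hrBasic_empty_nested (s t : T) :
    Disjoint (hrBasic s ∅) (hrBasic t ∅) ∨ hrBasic s ∅ ⊆ hrBasic t ∅ ∨
      hrBasic t ∅ ⊆ hrBasic s ∅ := by
  by_cases hst : s ≤ t
  · exact .inr (.inr (hrBasic_empty_subset_of_le hst))
  by_cases hts : t ≤ s
  · exact .inr (.inl (hrBasic_empty_subset_of_le hts))
  exact .inl (disjoint_hrBasic_empty hst hts)

theorem isOpen_hrBasic {t : T} {F : Finset T} (r : HighRays T) (ht : t ∈ r.1)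
    (hF : ∀ t' ∈ F, IsTopOf r.1 t') : IsOpen (hrBasic t F) :=
  TopologicalSpace.isOpen_generateFrom_of_mem ⟨t, F, r, ht, hF, rfl⟩

theorem isOpen_hrBasic_empty (t : T) : IsOpen (hrBasic t ∅) := by
  rcases (hrBasic t ∅).eq_empty_or_nonempty with h | ⟨r, hr⟩
  · exact h ▸ isOpen_empty
  · exact isOpen_hrBasic r (mem_hrBasic_empty.1 hr) (by simp)

theorem exists_isTopOf_le (hwf : WellFounded ((· < ·) : T → T → Prop)) {r : Set T} {t : T}
    (hrt : ∀ x ∈ r, x < t) : ∃ m, IsTopOf r m ∧ m ≤ t := by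
  obtain ⟨m, ⟨hmt, hrm⟩, hmin⟩ := hwf.has_min {s | s ≤ t ∧ ∀ x ∈ r, x < s} ⟨t, le_rfl, hrt⟩
  refine ⟨m, ⟨hrm, fun t' hrt' ht'm => ?_⟩, hmt⟩
  by_contra hne
  exact hmin t' ⟨ht'm.trans hmt, hrt'⟩ (ht'm.lt_of_ne hne)

theorem isClosed_hrBasic_empty (hwf : WellFounded ((· < ·) : T → T → Prop)) (t : T) :
    IsClosed (hrBasic t ∅) := by
  refine isOpen_compl_iff.1 (isOpen_iff_forall_mem_open.2 fun r hr => ?_)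
  have htr : t ∉ r.1 := fun h => hr (mem_hrBasic_empty.2 h)
  by_cases hbelow : ∀ x ∈ r.1, x ≤ t
  · obtain ⟨m, hm, hmt⟩ := exists_isTopOf_le hwf fun x hx =>
      (hbelow x hx).lt_of_ne fun h => htr (h ▸ hx)
    obtain ⟨f, hf, -⟩ := r.2.2.2
    refine ⟨hrBasic (f 0) {m}, ?_, isOpen_hrBasic r (hf 0) (by simpa using hm), hf 0, ?_⟩
    · exact fun r' hr' ht => hr'.2 m (Finset.mem_singleton_self m) (r'.mem_of_le hmt ht.1)
    · simpa using fun hmr => (hm.1 m hmr).false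
  · push Not at hbelow
    obtain ⟨x, hx, hxt⟩ := hbelow
    refine ⟨hrBasic x ∅, fun r' hx' ht => ?_, isOpen_hrBasic_empty x, mem_hrBasic_empty.2 hx⟩
    exact Set.disjoint_left.1
      (disjoint_hrBasic_empty hxt fun htx => htr (r.mem_of_le htx hx)) hx' ht

theorem exists_max_of_isChain_hrBasic_empty (hwf : WellFounded ((· < ·) : T → T → Prop))
    {c : Set (Set (HighRays T))} (hc : c ⊆ Set.range fun t : T => hrBasic t ∅)
    (hchain : IsChain (· ⊆ ·) c) (hne : c.Nonempty) : ∃ m ∈ c, ∀ x ∈ c, x ⊆ m := by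
  by_cases hempty : ∀ X ∈ c, X = ∅
  · obtain ⟨X, hX⟩ := hne
    exact ⟨X, hX, fun Y hY => (hempty Y hY).symm ▸ Set.empty_subset X⟩
  push Not at hempty
  obtain ⟨X₀, hX₀, r₀, hr₀⟩ := hempty
  obtain ⟨t₀, rfl⟩ := hc hX₀
  obtain ⟨m, ⟨hmr₀, hmc⟩, hmin⟩ :=
    hwf.has_min {s | s ∈ r₀.1 ∧ hrBasic s ∅ ∈ c} ⟨t₀, mem_hrBasic_empty.1 hr₀, hX₀⟩
  refine ⟨hrBasic m ∅, hmc, fun X hX => ?_⟩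
  rcases hchain.total hX hmc with hXm | hmX
  · exact hXm
  obtain ⟨s, rfl⟩ := hc hX
  have hsr₀ : s ∈ r₀.1 := mem_hrBasic_empty.1 (hmX (mem_hrBasic_empty.2 hmr₀))
  have hms : m ≤ s := by
    rcases r₀.2.1.total hmr₀ hsr₀ with h | h
    · exact h
    · exact (h.lt_or_eq.resolve_left (hmin s ⟨hsr₀, hX⟩)).ge
  exact hrBasic_empty_subset_of_le hms

open TopologicalSpace in
theorem topology_eq_generateFrom_hrBasic_empty (hwf : WellFounded ((· < ·) : T → T → Prop)) :
    (inferInstance : TopologicalSpace (HighRays T)) =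
      generateFrom
        (Set.range (fun t : T => hrBasic t ∅) ∪ compl '' Set.range (fun t : T => hrBasic t ∅)) := by
  set C := Set.range (fun t : T => hrBasic t ∅) ∪ compl '' Set.range (fun t : T => hrBasic t ∅)
  refine le_antisymm (le_generateFrom ?_) (le_generateFrom ?_)
  · rintro _ (⟨t, rfl⟩ | ⟨_, ⟨t, rfl⟩, rfl⟩)
    exacts [isOpen_hrBasic_empty t, (isClosed_hrBasic_empty hwf t).isOpen_compl]
  · rintro _ ⟨t, F, -, -, -, rfl⟩
    let _ : TopologicalSpace (HighRays T) := generateFrom C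
    rw [hrBasic_eq_inter]
    exact (isOpen_generateFrom_of_mem (.inl ⟨t, rfl⟩)).inter <| isOpen_biInter_finset
      fun t' _ => isOpen_generateFrom_of_mem (.inr ⟨_, ⟨t', rfl⟩, rfl⟩)

end HighRays

/-- for a special order tree `T`, the family `C = {[t,∅] : t ∈ T}` is a
nested, noetherian, σ-disjoint clopen subbase for the high-ray space `R(T)`. -/
theorem hrBasic_special_subbase {T : Type*} [PartialOrder T]
    (htree : IsOrderTree T) (hspecial : IsSpecialTree T) :
    (∀ t : T, IsClopen (hrBasic t (∅ : Finset T))) ∧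
    (∀ s t : T, Disjoint (hrBasic s (∅ : Finset T)) (hrBasic t (∅ : Finset T)) ∨
      hrBasic s (∅ : Finset T) ⊆ hrBasic t (∅ : Finset T) ∨
      hrBasic t (∅ : Finset T) ⊆ hrBasic s (∅ : Finset T)) ∧
    (∀ c : Set (Set (HighRays T)),
      c ⊆ Set.range (fun t : T => hrBasic t (∅ : Finset T)) →
      IsChain (· ⊆ ·) c → c.Nonempty → ∃ m ∈ c, ∀ x ∈ c, x ⊆ m) ∧
    (∃ A : ℕ → Set T, (⋃ n, A n) = Set.univ ∧ ∀ n, (A n).Pairwise fun a b =>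
      Disjoint (hrBasic a (∅ : Finset T)) (hrBasic b (∅ : Finset T))) ∧
    ((inferInstance : TopologicalSpace (HighRays T)) =
      TopologicalSpace.generateFrom
        (Set.range (fun t : T => hrBasic t (∅ : Finset T)) ∪
          compl '' Set.range (fun t : T => hrBasic t (∅ : Finset T)))) := by
  have hwf := wellFounded_lt_of_wellFoundedOn_Iio fun t => (htree t).2
  obtain ⟨A, hAcover, hAanti⟩ := hspecial
  refine ⟨fun t => ⟨isClosed_hrBasic_empty hwf t, isOpen_hrBasic_empty t⟩, hrBasic_empty_nested,
    fun c => exists_max_of_isChain_hrBasic_empty hwf, ⟨A, hAcover, fun n a ha b hb hab => ?_⟩,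
    topology_eq_generateFrom_hrBasic_empty hwf⟩
  exact disjoint_hrBasic_empty (hAanti n ha hb hab) (hAanti n hb ha hab.symm)
end
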